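/- Let α ∈ (0,1) and T > 0. There exists a constant C = C(α,T) > 0 such that for every positive integer N with δ = T/N ≤ 1 and every s ∈ (0,T] that is not a grid point (s ≠ t_s), one has ∫_0^{t_s} (s−u)^{−α−1} ( ∫_u^{t_s} ( ∫_u^{t_v} (v−z)^{−α−1} dz ) dv ) du ≤ C δ^{−α}, where the innermost integral is taken to be 0 when t_v ≤ u. -/

import Mathlib

/-!
For `t_v > u` the innermost integral equals `((v - t_v)^{-α} - (v - u)^{-α}) / α`, which is
at most `(v - t_v)^{-α} / α`, and `v ↦ (v - t_v)^{-α}` is `δ`-periodic with integral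
`δ^{1-α} / (1-α)` over a period. For `v < t_s` the innermost integral vanishes unless
`u ≤ t_s - δ`, and in that case `t_s - t_u ≤ 2 (t_s - u)`; so the middle integral is at most
`2 (t_s - u) δ^{-α} / (α (1-α))`. Finally `(s - u)^{-α-1} (t_s - u) ≤ (t_s - u)^{-α}`, whose
integral over `[0, t_s]` is `t_s^{1-α} / (1-α)`.
-/

open MeasureTheory Set Real intervalIntegral

/-- The largest grid point `δ⌊u/δ⌋` of the uniform partition with mesh `δ` not exceeding `u`. -/
noncomputable def tgrid (δ u : ℝ) : ℝ := δ * (⌊u / δ⌋ : ℤ)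

section Grid

variable {δ : ℝ}

lemma tgrid_le (hδ : 0 < δ) (u : ℝ) : tgrid δ u ≤ u := by
  have := mul_le_mul_of_nonneg_left (Int.floor_le (u / δ)) hδ.le
  rwa [mul_div_cancel₀ u hδ.ne'] at this

lemma sub_tgrid_lt (hδ : 0 < δ) (u : ℝ) : u - tgrid δ u < δ := by
  have := mul_lt_mul_of_pos_left (Int.lt_floor_add_one (u / δ)) hδ
  rw [mul_div_cancel₀ u hδ.ne'] at this
  unfold tgrid; linarith

lemma tgrid_add_self (hδ : δ ≠ 0) (u : ℝ) : tgrid δ (u + δ) = tgrid δ u + δ := by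
  simp only [tgrid, add_div, div_self hδ, Int.floor_add_one]
  push_cast; ring

lemma tgrid_eq_zero (hδ : 0 < δ) {u : ℝ} (hu : u ∈ Ico 0 δ) : tgrid δ u = 0 := by
  have : ⌊u / δ⌋ = 0 := by
    rw [Int.floor_eq_zero_iff]
    exact ⟨div_nonneg hu.1 hδ.le, (div_lt_one hδ).2 hu.2⟩
  simp [tgrid, this]

lemma tgrid_le_sub_of_lt (hδ : 0 < δ) {m : ℤ} {u : ℝ} (hu : u < δ * m) :
    tgrid δ u ≤ δ * m - δ := by
  have : ⌊u / δ⌋ ≤ m - 1 :=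
    Int.le_sub_one_of_lt (Int.floor_lt.2 (by rwa [div_lt_iff₀' hδ]))
  have := mul_le_mul_of_nonneg_left (Int.cast_le (R := ℝ).2 this) hδ.le
  push_cast at this
  unfold tgrid; linarith

lemma ae_tgrid_ne (δ : ℝ) : ∀ᵐ u : ℝ, tgrid δ u ≠ u := by
  refine measure_mono_null (fun u hu => ?_) ((countable_range fun k : ℤ => δ * k).measure_zero _)
  exact ⟨⌊u / δ⌋, not_not.1 hu⟩

end Grid

lemma intervalIntegral_mono_of_nonneg {f g : ℝ → ℝ} {a b : ℝ} (hab : a ≤ b)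
    (hg : IntervalIntegrable g volume a b) (hf : ∀ᵐ x, x ∈ Ioc a b → 0 ≤ f x)
    (hfg : ∀ᵐ x, x ∈ Ioc a b → f x ≤ g x) :
    ∫ x in a..b, f x ≤ ∫ x in a..b, g x := by
  rw [integral_of_le hab, integral_of_le hab]
  exact integral_mono_of_nonneg ((ae_restrict_iff' measurableSet_Ioc).2 hf) hg.1
    ((ae_restrict_iff' measurableSet_Ioc).2 hfg)

lemma integral_sub_rpow_neg_sub_one_le {α u w v : ℝ} (hα : 0 < α) (huw : u ≤ w)
    (hwv : w < v) :
    ∫ z in u..w, (v - z) ^ (-α - 1) ≤ (v - w) ^ (-α) / α := by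
  have hne : -α - 1 ≠ -1 := by linarith
  have h0 : (0 : ℝ) ∉ uIcc (v - w) (v - u) := notMem_uIcc_of_lt (by linarith) (by linarith)
  rw [integral_comp_sub_left (fun x => x ^ (-α - 1)), integral_rpow (Or.inr ⟨hne, h0⟩),
    sub_add_cancel, div_neg, ← neg_div, neg_sub]
  gcongr
  linarith [rpow_nonneg (by linarith : (0 : ℝ) ≤ v - u) (-α)]

lemma rpow_neg_sub_one_mul_sub_le {α u w s : ℝ} (hα : 0 ≤ α) (huw : u < w) (hws : w ≤ s) :
    (s - u) ^ (-α - 1) * (w - u) ≤ (w - u) ^ (-α) := by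
  have hsu : 0 < s - u := by linarith
  calc (s - u) ^ (-α - 1) * (w - u) ≤ (s - u) ^ (-α - 1) * (s - u) := by gcongr
    _ = (s - u) ^ (-α) := by rw [← rpow_add_one hsu.ne', sub_add_cancel]
    _ ≤ (w - u) ^ (-α) := rpow_le_rpow_of_nonpos (by linarith) (by linarith) (by linarith)

lemma integral_sub_rpow_neg {α : ℝ} (hα : α < 1) (b : ℝ) :
    ∫ u in (0 : ℝ)..b, (b - u) ^ (-α) = b ^ (1 - α) / (1 - α) := by
  rw [integral_comp_sub_left (fun x => x ^ (-α)), sub_self, sub_zero,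
    integral_rpow (Or.inl (by linarith)), zero_rpow (by linarith), sub_zero, neg_add_eq_sub]

lemma intervalIntegrable_sub_rpow_neg {α : ℝ} (hα : α < 1) (b : ℝ) :
    IntervalIntegrable (fun u => (b - u) ^ (-α)) volume 0 b := by
  simpa using
    ((intervalIntegrable_rpow' (a := 0) (b := b) (r := -α) (by linarith)).comp_sub_left b).symm

section Kernel

variable {α δ : ℝ}

lemma periodic_sub_tgrid_rpow (hδ : δ ≠ 0) :
    Function.Periodic (fun v => (v - tgrid δ v) ^ (-α)) δ := fun v => by
  simp only [tgrid_add_self hδ, add_sub_add_right_eq_sub]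

lemma sub_tgrid_rpow_eqOn (hδ : 0 < δ) :
    EqOn (fun v => (v - tgrid δ v) ^ (-α)) (fun v => v ^ (-α)) (uIoo 0 δ) := fun v hv => by
  rw [uIoo_of_le hδ.le] at hv
  simp only [tgrid_eq_zero hδ (Ioo_subset_Ico_self hv), sub_zero]

lemma intervalIntegrable_sub_tgrid_rpow (hα : α < 1) (hδ : 0 < δ) (a b : ℝ) :
    IntervalIntegrable (fun v => (v - tgrid δ v) ^ (-α)) volume a b :=
  (periodic_sub_tgrid_rpow hδ.ne').intervalIntegrable₀ hδ.ne'
    ((intervalIntegrable_rpow' (by linarith)).congr_uIoo (sub_tgrid_rpow_eqOn hδ).symm) a b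

lemma integral_sub_tgrid_rpow_add_zsmul (hα : α < 1) (hδ : 0 < δ) (t : ℝ) (n : ℤ) :
    ∫ v in t..t + n • δ, (v - tgrid δ v) ^ (-α) = n * (δ ^ (1 - α) / (1 - α)) := by
  rw [(periodic_sub_tgrid_rpow hδ.ne').intervalIntegral_add_zsmul_eq n t
      (intervalIntegrable_sub_tgrid_rpow hα hδ),
    (periodic_sub_tgrid_rpow hδ.ne').intervalIntegral_add_eq t 0, zero_add,
    integral_congr_uIoo (sub_tgrid_rpow_eqOn hδ), integral_rpow (Or.inl (by linarith)),
    zero_rpow (by linarith), sub_zero, zsmul_eq_mul, neg_add_eq_sub]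

lemma integral_sub_tgrid_rpow_le (hα : α < 1) (hδ : 0 < δ) {m : ℤ} {u : ℝ}
    (hu : u ≤ δ * m) :
    ∫ v in u..δ * m, (v - tgrid δ v) ^ (-α) ≤ (δ * m - u + δ) * δ ^ (-α) / (1 - α) := by
  have hgrid : δ * m = tgrid δ u + (m - ⌊u / δ⌋) • δ := by
    simp only [tgrid, zsmul_eq_mul]; push_cast; ring
  calc ∫ v in u..δ * m, (v - tgrid δ v) ^ (-α)
      ≤ ∫ v in tgrid δ u..δ * m, (v - tgrid δ v) ^ (-α) :=
        integral_mono_interval (tgrid_le hδ u) hu le_rfl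
          (ae_of_all _ fun v => rpow_nonneg (sub_nonneg.2 (tgrid_le hδ v)) _)
          (intervalIntegrable_sub_tgrid_rpow hα hδ _ _)
    _ = (δ * m - tgrid δ u) * δ ^ (-α) / (1 - α) := by
        rw [hgrid, integral_sub_tgrid_rpow_add_zsmul hα hδ, add_sub_cancel_left, zsmul_eq_mul,
          show (1 : ℝ) - α = 1 + -α by ring, rpow_add hδ, rpow_one]
        ring
    _ ≤ (δ * m - u + δ) * δ ^ (-α) / (1 - α) := by
        gcongr
        linarith [sub_tgrid_lt hδ u]

end Kernel

noncomputable def innerIntegral (α δ u v : ℝ) : ℝ :=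
  if tgrid δ v ≤ u then 0 else ∫ z in u..tgrid δ v, (v - z) ^ (-α - 1)

section Inner

variable {α δ u v : ℝ}

lemma innerIntegral_nonneg (hδ : 0 < δ) : 0 ≤ innerIntegral α δ u v := by
  unfold innerIntegral
  split_ifs with h
  · exact le_rfl
  · exact integral_nonneg (not_le.1 h).le fun z hz =>
      rpow_nonneg (by linarith [hz.2, tgrid_le hδ v]) _

lemma innerIntegral_le (hα : 0 < α) (hδ : 0 < δ) (hv : tgrid δ v ≠ v) :
    innerIntegral α δ u v ≤ (v - tgrid δ v) ^ (-α) / α := by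
  have hlt : tgrid δ v < v := (tgrid_le hδ v).lt_of_ne hv
  unfold innerIntegral
  split_ifs with h
  · exact div_nonneg (rpow_nonneg (by linarith) _) hα.le
  · exact integral_sub_rpow_neg_sub_one_le hα (not_le.1 h).le hlt

lemma innerIntegral_eq_zero (hδ : 0 < δ) {m : ℤ} (hu : δ * m - δ ≤ u) (hv : v < δ * m) :
    innerIntegral α δ u v = 0 :=
  if_pos ((tgrid_le_sub_of_lt hδ hv).trans hu)

lemma integral_innerIntegral_le (hα0 : 0 < α) (hα1 : α < 1) (hδ : 0 < δ) {m : ℤ}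
    (hu : u ≤ δ * m) :
    ∫ v in u..δ * m, innerIntegral α δ u v
      ≤ 2 / (α * (1 - α)) * (δ * m - u) * δ ^ (-α) := by
  have hrhs : 0 ≤ 2 / (α * (1 - α)) * (δ * m - u) * δ ^ (-α) := by
    have : 0 < 1 - α := by linarith
    have : 0 ≤ δ * m - u := by linarith
    positivity
  rcases lt_or_ge (δ * m - δ) u with hnear | hfar
  · rw [integral_congr_uIoo (g := fun _ => 0) fun v hv => ?_, intervalIntegral.integral_zero]
    · exact hrhs
    · rw [uIoo_of_le hu] at hv
      exact innerIntegral_eq_zero hδ hnear.le hv.2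
  calc ∫ v in u..δ * m, innerIntegral α δ u v
      ≤ ∫ v in u..δ * m, (v - tgrid δ v) ^ (-α) / α :=
        intervalIntegral_mono_of_nonneg hu
          ((intervalIntegrable_sub_tgrid_rpow hα1 hδ _ _).div_const α)
          (ae_of_all _ fun _ _ => innerIntegral_nonneg hδ)
          ((ae_tgrid_ne δ).mono fun _ hv _ => innerIntegral_le hα0 hδ hv)
    _ = (∫ v in u..δ * m, (v - tgrid δ v) ^ (-α)) / α := intervalIntegral.integral_div _ _
    _ ≤ (δ * m - u + δ) * δ ^ (-α) / (1 - α) / α := by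
        gcongr; exact integral_sub_tgrid_rpow_le hα1 hδ hu
    _ ≤ 2 * (δ * m - u) * δ ^ (-α) / (1 - α) / α := by
        have : 0 < 1 - α := by linarith
        gcongr
        linarith
    _ = 2 / (α * (1 - α)) * (δ * m - u) * δ ^ (-α) := by field_simp

lemma integral_rpow_mul_integral_innerIntegral_le (hα0 : 0 < α) (hα1 : α < 1) (hδ : 0 < δ)
    {m : ℤ} {s : ℝ} (hm : 0 ≤ δ * m) (hs : δ * m < s) :
    ∫ u in (0 : ℝ)..δ * m, (s - u) ^ (-α - 1) * ∫ v in u..δ * m, innerIntegral α δ u v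
      ≤ 2 / (α * (1 - α)) * δ ^ (-α) * ((δ * m) ^ (1 - α) / (1 - α)) := by
  set K := 2 / (α * (1 - α)) * δ ^ (-α)
  have hK : 0 ≤ K := by
    have : 0 < 1 - α := by linarith
    positivity
  rw [← integral_sub_rpow_neg hα1, ← intervalIntegral.integral_const_mul]
  refine intervalIntegral_mono_of_nonneg hm ((intervalIntegrable_sub_rpow_neg hα1 _).const_mul K)
    (ae_of_all _ fun u hu => ?_) (ae_of_all _ fun u hu => ?_)
  · exact mul_nonneg (rpow_nonneg (by linarith [hu.2]) _)
      (integral_nonneg hu.2 fun _ _ => innerIntegral_nonneg hδ)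
  rcases hu.2.lt_or_eq with hlt | rfl
  · calc (s - u) ^ (-α - 1) * ∫ v in u..δ * m, innerIntegral α δ u v
        ≤ (s - u) ^ (-α - 1) * (2 / (α * (1 - α)) * (δ * m - u) * δ ^ (-α)) := by
          gcongr
          · exact rpow_nonneg (by linarith) _
          · exact integral_innerIntegral_le hα0 hα1 hδ hu.2
      _ = K * ((s - u) ^ (-α - 1) * (δ * m - u)) := by ring
      _ ≤ K * (δ * m - u) ^ (-α) := by
          gcongr; exact rpow_neg_sub_one_mul_sub_le hα0.le hlt hs.le
  · rw [integral_same, mul_zero]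
    exact mul_nonneg hK (rpow_nonneg (sub_self _).ge _)

end Inner

/-- For `α ∈ (0,1)` there is `C = C(α,T)` such that for every partition with mesh
`δ = T/N ≤ 1` and every non-grid point `s ∈ (0,T]`,
`∫_0^{t_s} (s−u)^{−α−1} ∫_u^{t_s} ∫_u^{t_v} (v−z)^{−α−1} dz dv du ≤ C δ^{−α}`,
the innermost integral being `0` when `t_v ≤ u`. -/
theorem stmt_8 (α T : ℝ) (hα0 : 0 < α) (hα1 : α < 1) (hT : 0 < T) :
    ∃ C : ℝ, 0 < C ∧ ∀ N : ℕ, 0 < N → T / N ≤ 1 →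
      ∀ s ∈ Set.Ioc (0:ℝ) T, s ≠ tgrid (T / N) s →
        (∫ u in (0:ℝ)..tgrid (T / N) s, (s - u) ^ (-α - 1) *
            ∫ v in u..tgrid (T / N) s,
              (if tgrid (T / N) v ≤ u then 0
               else ∫ z in u..tgrid (T / N) v, (v - z) ^ (-α - 1)))
          ≤ C * (T / N) ^ (-α) := by
  have h1α : 0 < 1 - α := by linarith
  refine ⟨2 * T ^ (1 - α) / (α * (1 - α) ^ 2), by positivity, fun N hN _ s hs hsne => ?_⟩
  have hδ : 0 < T / N := by positivity
  have hts : 0 ≤ tgrid (T / N) s :=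
    mul_nonneg hδ.le (Int.cast_nonneg (Int.floor_nonneg.2 (div_nonneg hs.1.le hδ.le)))
  calc _ ≤ 2 / (α * (1 - α)) * (T / N) ^ (-α) * (tgrid (T / N) s ^ (1 - α) / (1 - α)) :=
        integral_rpow_mul_integral_innerIntegral_le hα0 hα1 hδ hts
          ((tgrid_le hδ s).lt_of_ne hsne.symm)
    _ ≤ 2 / (α * (1 - α)) * (T / N) ^ (-α) * (T ^ (1 - α) / (1 - α)) := by
        gcongr; exact (tgrid_le hδ s).trans hs.2
    _ = 2 * T ^ (1 - α) / (α * (1 - α) ^ 2) * (T / N) ^ (-α) := by field_simp
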